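/- If a complex number z ≠ 0 satisfies |z| < 1 and |arg z| ≤ π/2 (i.e., Re z ≥ 0), then for every α ∈ (0, π/2), Re{e^{j(α−π/2)}(j + z)} > 0; i.e., region R2 (the open unit half-disk in the closed right half-plane) satisfies the decentralized stability half-plane condition. -/

import Mathlib

/-! Since `e^{j(α - π/2)} = sin α - j cos α`, the real part in question equals
`cos α (1 + Im z) + sin α Re z`; the first term is positive because `|Im z| ≤ |z| < 1`,
the second nonnegative because `Re z ≥ 0`. -/

open Complex
open scoped Real

theorem re_exp_sub_pi_div_two_mul_I_mul (α : ℝ) (w : ℂ) :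
    (exp (↑(α - π / 2) * I) * w).re = Real.sin α * w.re + Real.cos α * w.im := by
  rw [exp_mul_I, ← ofReal_cos, ← ofReal_sin, Real.cos_sub_pi_div_two, Real.sin_sub_pi_div_two]
  simp only [mul_re, add_re, add_im, ofReal_re, ofReal_im, mul_im, I_re, I_im]
  ring

theorem re_exp_sub_pi_div_two_mul_I_mul_I_add_pos {α : ℝ} (hsin : 0 ≤ Real.sin α)
    (hcos : 0 < Real.cos α) {z : ℂ} (hre : 0 ≤ z.re) (him : -1 < z.im) :
    0 < (exp (↑(α - π / 2) * I) * (I + z)).re := by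
  rw [re_exp_sub_pi_div_two_mul_I_mul, add_re, add_im, I_re, I_im, zero_add]
  exact add_pos_of_nonneg_of_pos (mul_nonneg hsin hre) (mul_pos hcos (by linarith))

theorem region_R2_stability_general (α : ℝ) (hα0 : 0 < α) (hα1 : α < Real.pi / 2)
    (z : ℂ) (hz1 : ‖z‖ < 1)
    (hz2 : |Complex.arg z| ≤ Real.pi / 2) :
    0 < (Complex.exp ((↑(α - Real.pi / 2)) * Complex.I) * (Complex.I + z)).re := by
  have hsin : 0 ≤ Real.sin α :=
    Real.sin_nonneg_of_nonneg_of_le_pi hα0.le (by linarith [Real.pi_pos])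
  have hcos : 0 < Real.cos α := Real.cos_pos_of_mem_Ioo ⟨by linarith [Real.pi_pos], hα1⟩
  have him : -1 < z.im := (abs_lt.mp ((abs_im_le_norm z).trans_lt hz1)).1
  exact re_exp_sub_pi_div_two_mul_I_mul_I_add_pos hsin hcos (abs_arg_le_pi_div_two_iff.mp hz2) him

/-- If z ≠ 0 satisfies |z| < 1 and |arg z| ≤ π/2 (i.e. Re z ≥ 0), then for
every α ∈ (0, π/2), Re{e^{j(α−π/2)}(j + z)} > 0: region R2 (open unit half-disk in the
closed right half-plane) satisfies the decentralized stability half-plane condition. -/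
theorem region_R2_stability (α : ℝ) (hα0 : 0 < α) (hα1 : α < Real.pi / 2)
    (z : ℂ) (hz0 : z ≠ 0) (hz1 : ‖z‖ < 1)
    (hz2 : |Complex.arg z| ≤ Real.pi / 2) :
    0 < (Complex.exp ((↑(α - Real.pi / 2)) * Complex.I) * (Complex.I + z)).re :=
  region_R2_stability_general α hα0 hα1 z hz1 hz2
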